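/- Define, for θ ∈ ℝ and v > 0, G(θ, v) = v⁻¹ ∫_ℝ ∫_ℝ exp{−(n/(2σ²))(ȳ − θ)² − (n₀/(2σ₀²))(ȳ₀ − θ₀)² − ((θ − μ)² + (θ₀ − μ)²)/(2v)} dθ₀ dμ (the hierarchical-model conditional joint density of θ given v, with improper uniform prior on μ), and for a₀ ∈ (0,1), H(θ, a₀) = exp{−(n/(2σ²))(ȳ − θ)²} · exp{−(a₀/(2σ₀²))(S₀ + n₀(ȳ₀ − θ)²)} / ∫_ℝ exp{−(a₀/(2σ₀²))(S₀ + n₀(ȳ₀ − t)²)} dt (the normalized-power-prior conditional density of θ given a₀). Then for all θ ∈ ℝ and v > 0, G(θ, v) = (2π)^{3/2} (σ₀²/n₀)^{1/2} · H(θ, f(v)); in particular the ratio G(θ, v)/H(θ, f(v)) is a constant depending only on σ₀² and n₀, not on θ, v, ȳ, ȳ₀, n, σ² or S₀. -/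

import Mathlib

/-!
Integrating out the historical parameter `θ₀` and the hierarchical mean `μ` is a chain of two
Gaussian convolutions, whose precisions `n₀/(2σ₀²)`, `1/(2v)`, `1/(2v)` combine in series
(`αβγ/(αβ + βγ + γα) = 1/(1/α + 1/β + 1/γ)`). So `θ` sees the historical mean `ȳ₀` through the
precision `1 / (2σ₀²/n₀ + 4v) = f(v) n₀ / (2σ₀²)`, exactly that of the power prior with discount
`a₀ = f(v)`. The factors `exp (-a₀ S₀ / (2σ₀²))` cancel in the normalized power prior, and what is
left of the Gaussian normalizing constants is
`2π √(f v) = (2π)^{3/2} √(σ₀²/n₀) / √(π / (f(v) n₀ / (2σ₀²)))`.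
-/

open MeasureTheory Real

theorem integral_exp_neg_mul_sub_sq (b c : ℝ) :
    ∫ x : ℝ, exp (-b * (x - c) ^ 2) = √(π / b) := by
  rw [integral_sub_right_eq_self (fun x => exp (-b * x ^ 2)) c, integral_gaussian]

theorem integral_exp_neg_mul_sub_sq_sub_mul_sub_sq {p q : ℝ} (hpq : p + q ≠ 0) (a b : ℝ) :
    ∫ x : ℝ, exp (-p * (x - a) ^ 2 - q * (x - b) ^ 2)
      = √(π / (p + q)) * exp (-(p * q / (p + q)) * (a - b) ^ 2) := by
  have complete_square : ∀ x : ℝ, -p * (x - a) ^ 2 - q * (x - b) ^ 2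
      = -(p + q) * (x - (p * a + q * b) / (p + q)) ^ 2 + -(p * q / (p + q)) * (a - b) ^ 2 := by
    intro x
    field_simp
    ring
  simp_rw [complete_square, exp_add]
  rw [integral_mul_const, integral_exp_neg_mul_sub_sq]

theorem integral_integral_exp_neg_gaussian_chain {α β γ : ℝ} (hαβ : 0 < α + β)
    (hs : 0 < α * β + β * γ + γ * α) (a b : ℝ) :
    ∫ μ : ℝ, ∫ x : ℝ, exp (-α * (x - a) ^ 2 - β * (x - μ) ^ 2 - γ * (μ - b) ^ 2)
      = π / √(α * β + β * γ + γ * α) *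
          exp (-(α * β * γ / (α * β + β * γ + γ * α)) * (a - b) ^ 2) := by
  set c := α * β / (α + β)
  have hcγ : c + γ = (α * β + β * γ + γ * α) / (α + β) := by
    simp only [c]
    field_simp
    ring
  have hcγ_pos : 0 < c + γ := hcγ ▸ div_pos hs hαβ
  have inner : ∀ μ : ℝ, ∫ x : ℝ, exp (-α * (x - a) ^ 2 - β * (x - μ) ^ 2 - γ * (μ - b) ^ 2)
      = √(π / (α + β)) * exp (-c * (μ - a) ^ 2 - γ * (μ - b) ^ 2) := by
    intro μ
    simp_rw [sub_eq_add_neg _ (γ * _), exp_add]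
    rw [integral_mul_const, integral_exp_neg_mul_sub_sq_sub_mul_sub_sq hαβ.ne', ← neg_sq (a - μ),
      neg_sub]
    ring
  simp_rw [inner]
  rw [integral_const_mul, integral_exp_neg_mul_sub_sq_sub_mul_sub_sq hcγ_pos.ne', ← mul_assoc,
    ← sqrt_mul (div_pos pi_pos hαβ).le, div_mul_div_comm, hcγ, mul_div_cancel₀ _ hαβ.ne',
    sqrt_div' _ hs.le, sqrt_mul_self pi_pos.le]
  congr 3
  simp only [c]
  field_simp

theorem integral_integral_exp_hierarchical {α v : ℝ} (hα : 0 ≤ α) (hv : 0 < v) (A y θ : ℝ) :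
    ∫ μ : ℝ, ∫ θ₀ : ℝ, exp (A - α * (y - θ₀) ^ 2 - ((θ - μ) ^ 2 + (θ₀ - μ) ^ 2) / (2 * v))
      = exp A * (v * (2 * π * √(1 + 4 * v * α)⁻¹ *
          exp (-((1 + 4 * v * α)⁻¹ * α) * (y - θ) ^ 2))) := by
  set a := (1 + 4 * v * α)⁻¹
  set β := (2 * v)⁻¹
  have ha : 0 < a := by positivity
  have hβ : 0 < β := by positivity
  have hexponent : ∀ μ θ₀ : ℝ, A - α * (y - θ₀) ^ 2 - ((θ - μ) ^ 2 + (θ₀ - μ) ^ 2) / (2 * v)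
      = A + (-α * (θ₀ - y) ^ 2 - β * (θ₀ - μ) ^ 2 - β * (μ - θ) ^ 2) := by
    intro μ θ₀
    simp only [β]
    field_simp
    ring
  have hprecision : α * β * β / (α * β + β * β + β * α) = a * α := by
    simp only [a, β]
    field_simp
    ring
  have hs : α * β + β * β + β * α = (2 * v * √a)⁻¹ ^ 2 := by
    rw [inv_pow, mul_pow, sq_sqrt ha.le]
    simp only [a, β]
    field_simp
    ring
  simp_rw [hexponent, exp_add, integral_const_mul]
  rw [integral_integral_exp_neg_gaussian_chain (by positivity) (by positivity), hprecision, hs,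
    sqrt_sq (by positivity), div_inv_eq_mul]
  ring

theorem div_integral_exp_neg_mul_add_mul_sq (k S m y θ : ℝ) :
    exp (-k * (S + m * (y - θ) ^ 2)) / ∫ t : ℝ, exp (-k * (S + m * (y - t) ^ 2))
      = exp (-(k * m) * (y - θ) ^ 2) / √(π / (k * m)) := by
  have hsplit : ∀ t : ℝ, exp (-k * (S + m * (y - t) ^ 2))
      = exp (-k * S) * exp (-(k * m) * (t - y) ^ 2) := by
    intro t
    rw [← exp_add]
    ring_nf
  simp_rw [hsplit]
  rw [integral_const_mul, integral_exp_neg_mul_sub_sq, ← neg_sub, neg_sq,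
    mul_div_mul_left _ _ (exp_pos _).ne']

theorem two_pi_rpow_three_halves_mul_sqrt_div {a : ℝ} (ha : 0 < a) (σ n : ℝ) :
    (2 * π) ^ ((3 : ℝ) / 2) * √(σ / n) = 2 * π * √a * √(π / (a * (n / (2 * σ)))) := by
  have hπ : 0 ≤ 2 * π := by positivity
  have hratio : π / (a * (n / (2 * σ))) = 2 * π * (σ / n) / a := by
    simp only [div_eq_mul_inv, mul_inv, inv_inv]
    ring
  rw [hratio, sqrt_div' _ ha.le, sqrt_mul hπ,
    show (3 : ℝ) / 2 = 1 + 1 / 2 by norm_num, rpow_add' hπ (by norm_num), rpow_one,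
    ← sqrt_eq_rpow]
  field_simp

theorem stmt_9_general (σ2 σ02 n n0 : ℝ) (hσ02 : 0 < σ02) (hn0 : 0 < n0)
    (ybar ybar0 S0 : ℝ)
    (f : ℝ → ℝ) (hf : ∀ v, f v = (1 + 2 * v * n0 / σ02)⁻¹)
    (G H : ℝ → ℝ → ℝ)
    (hG : ∀ θ : ℝ, ∀ v > (0 : ℝ), G θ v = v⁻¹ * ∫ μ : ℝ, ∫ θ0 : ℝ,
        Real.exp (-(n / (2 * σ2)) * (ybar - θ) ^ 2 -
          (n0 / (2 * σ02)) * (ybar0 - θ0) ^ 2 -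
          ((θ - μ) ^ 2 + (θ0 - μ) ^ 2) / (2 * v)))
    (hH : ∀ θ a0 : ℝ, H θ a0 =
        Real.exp (-(n / (2 * σ2)) * (ybar - θ) ^ 2) *
          Real.exp (-(a0 / (2 * σ02)) * (S0 + n0 * (ybar0 - θ) ^ 2)) /
        (∫ t : ℝ, Real.exp (-(a0 / (2 * σ02)) * (S0 + n0 * (ybar0 - t) ^ 2)))) :
    ∀ θ : ℝ, ∀ v > (0 : ℝ),
      G θ v = (2 * π) ^ ((3 : ℝ) / 2) * Real.sqrt (σ02 / n0) * H θ (f v) := by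
  intro θ v hv
  have hfv : f v = (1 + 4 * v * (n0 / (2 * σ02)))⁻¹ := by
    rw [hf]
    ring
  have hfv_pos : 0 < f v := hfv ▸ by positivity
  rw [hG θ v hv, integral_integral_exp_hierarchical (by positivity) hv, ← hfv, hH, mul_div_assoc,
    div_integral_exp_neg_mul_add_mul_sq, two_pi_rpow_three_halves_mul_sqrt_div hfv_pos,
    show f v / (2 * σ02) * n0 = f v * (n0 / (2 * σ02)) by ring]
  have hnormalizer : √(π / (f v * (n0 / (2 * σ02)))) ≠ 0 := by positivity
  field_simp

/-- the hierarchical-model conditional joint density of `θ` given `v`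
(improper uniform prior on `μ`) is a constant multiple — depending only on `σ₀²` and
`n₀` — of the normalized-power-prior conditional density of `θ` given `a₀ = f(v)`. -/
theorem stmt_9 (σ2 σ02 n n0 : ℝ) (hσ2 : 0 < σ2) (hσ02 : 0 < σ02) (hn : 0 < n) (hn0 : 0 < n0)
    (ybar ybar0 S0 : ℝ) (hS0 : 0 ≤ S0)
    (f : ℝ → ℝ) (hf : ∀ v, f v = (1 + 2 * v * n0 / σ02)⁻¹)
    (G H : ℝ → ℝ → ℝ)
    (hG : ∀ θ : ℝ, ∀ v > (0 : ℝ), G θ v = v⁻¹ * ∫ μ : ℝ, ∫ θ0 : ℝ,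
        Real.exp (-(n / (2 * σ2)) * (ybar - θ) ^ 2 -
          (n0 / (2 * σ02)) * (ybar0 - θ0) ^ 2 -
          ((θ - μ) ^ 2 + (θ0 - μ) ^ 2) / (2 * v)))
    (hH : ∀ θ a0 : ℝ, H θ a0 =
        Real.exp (-(n / (2 * σ2)) * (ybar - θ) ^ 2) *
          Real.exp (-(a0 / (2 * σ02)) * (S0 + n0 * (ybar0 - θ) ^ 2)) /
        (∫ t : ℝ, Real.exp (-(a0 / (2 * σ02)) * (S0 + n0 * (ybar0 - t) ^ 2)))) :
    ∀ θ : ℝ, ∀ v > (0 : ℝ),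
      G θ v = (2 * π) ^ ((3 : ℝ) / 2) * Real.sqrt (σ02 / n0) * H θ (f v) :=
  stmt_9_general σ2 σ02 n n0 hσ02 hn0 ybar ybar0 S0 f hf G H hG hH
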